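/- Let Λ be an index set. The Lie subalgebra generated by B_Λ (the smallest real subspace containing B_Λ and closed under the bracket) equals se(n) if and only if the n-th transitive closure of the graph G(B_Λ) is the complete graph on the (n+1) vertices {1,...,n+1}, i.e., every pair of distinct vertices is joined by a (solid or broken) edge of G^{(n)}. -/

import Mathlib

open Matrix

/-!
Common setup: real (n+1)×(n+1) matrices (rows/columns indexed by `Fin (n+1)`,
where index `i : Fin n` cast via `Fin.castSucc` plays the role of `i ∈ {1,…,n}`
and `Fin.last n` plays the role of the index `n+1`), the Lie bracket
`⁅A,B⁆ = A*B - B*A`, the matrices `Ω̃_{ij}` and `E_{k,n+1}`, the Lie algebra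
`se(n)`, index sets `Λ`, pattern subspaces `B_Λ`, graphs with solid/broken
edges, the one-step transitive closure, and derived distributions.
-/

/-- The ambient space of real (n+1)×(n+1) matrices. -/
abbrev Mat (n : ℕ) := Matrix (Fin (n + 1)) (Fin (n + 1)) ℝ

/-- `Ω̃_{ij}`: 1 in entry (i,j), −1 in entry (j,i), 0 elsewhere (indices among 1,…,n). -/
def Omega {n : ℕ} (i j : Fin n) : Mat n :=
  Matrix.single i.castSucc j.castSucc 1 - Matrix.single j.castSucc i.castSucc 1

/-- `E_{k,n+1}`: 1 in entry (k, n+1), 0 elsewhere. -/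
def Ecol {n : ℕ} (k : Fin n) : Mat n :=
  Matrix.single k.castSucc (Fin.last n) 1

/-- The set se(n): matrices whose (n+1)-th row is zero and with
`M(i,j) = −M(j,i)` for all 1 ≤ i,j ≤ n. -/
def seSet (n : ℕ) : Set (Mat n) :=
  {M | (∀ j, M (Fin.last n) j = 0) ∧
    ∀ i j : Fin n, M i.castSucc j.castSucc = - M j.castSucc i.castSucc}

/-- se(n) as a real subspace of the (n+1)×(n+1) matrices. -/
def seL (n : ℕ) : Submodule ℝ (Mat n) where
  carrier := seSet n
  add_mem' := by
    rintro a b ⟨ha1, ha2⟩ ⟨hb1, hb2⟩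
    refine ⟨fun j => ?_, fun i j => ?_⟩
    · simp [Matrix.add_apply, ha1 j, hb1 j]
    · simp only [Matrix.add_apply, ha2 i j, hb2 i j]; ring
  zero_mem' := by
    refine ⟨fun j => ?_, fun i j => ?_⟩ <;> simp
  smul_mem' := by
    rintro c a ⟨ha1, ha2⟩
    refine ⟨fun j => ?_, fun i j => ?_⟩
    · simp [Matrix.smul_apply, ha1 j]
    · simp only [Matrix.smul_apply, ha2 i j, smul_neg]

/-- Kronecker delta (real-valued). -/
def kron {n : ℕ} (p q : Fin n) : ℝ := if p = q then 1 else 0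

/-- An index set Λ: a set of pairs (p,q) with p < q, i.e. a subset of
`{(i,j) : 1 ≤ i < j ≤ n} ∪ {(k, n+1) : 1 ≤ k ≤ n}`. -/
def IndexSet {n : ℕ} (Λ : Set (Fin (n + 1) × Fin (n + 1))) : Prop :=
  ∀ e ∈ Λ, e.1 < e.2

/-- The generating set `{Ω̃_{ij} : (i,j) ∈ Λ, j ≤ n} ∪ {E_{k,n+1} : (k,n+1) ∈ Λ}`. -/
def genSet {n : ℕ} (Λ : Set (Fin (n + 1) × Fin (n + 1))) : Set (Mat n) :=
  {M | (∃ i j : Fin n, (i.castSucc, j.castSucc) ∈ Λ ∧ M = Omega i j) ∨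
    (∃ k : Fin n, (k.castSucc, Fin.last n) ∈ Λ ∧ M = Ecol k)}

/-- The pattern subspace `B_Λ`. -/
def BLam {n : ℕ} (Λ : Set (Fin (n + 1) × Fin (n + 1))) : Submodule ℝ (Mat n) :=
  Submodule.span ℝ (genSet Λ)

attribute [local instance 100] LieRing.ofAssociativeRing

/-- `B_Λ` generates `se(n)` as a Lie algebra: the smallest real subspace containing
`B_Λ` and closed under the bracket (i.e. the Lie subalgebra generated by `B_Λ`)
equals `se(n)`. -/
def GeneratesSE (n : ℕ) (Λ : Set (Fin (n + 1) × Fin (n + 1))) : Prop :=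
  (LieSubalgebra.lieSpan ℝ (Mat n) (BLam Λ : Set (Mat n)) : Set (Mat n)) = seSet n

/-- A graph on vertices {1,…,n+1} recorded by its solid and broken adjacency relations. -/
structure SBGraph (n : ℕ) where
  solid : Fin (n + 1) → Fin (n + 1) → Prop
  broken : Fin (n + 1) → Fin (n + 1) → Prop

/-- A well-formed solid/broken graph: simple and symmetric; solid edges have both
endpoints among 1,…,n, broken edges have one endpoint equal to n+1. -/
def SBGraph.Good {n : ℕ} (G : SBGraph n) : Prop :=
  (∀ p q, G.solid p q → G.solid q p) ∧ (∀ p q, G.solid p q → p ≠ q) ∧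
  (∀ p q, G.solid p q → p ≠ Fin.last n ∧ q ≠ Fin.last n) ∧
  (∀ p q, G.broken p q → G.broken q p) ∧ (∀ p q, G.broken p q → p ≠ q) ∧
  (∀ p q, G.broken p q → p = Fin.last n ∨ q = Fin.last n)

/-- The one-step closure: for distinct vertices i,j,k, add a solid edge {i,k} whenever
{i,j} and {j,k} are both solid, and a broken edge {i,k} whenever one of {i,j},{j,k} is
solid and the other is broken (nothing is added when both are broken). -/
def SBGraph.step {n : ℕ} (G : SBGraph n) : SBGraph n where
  solid := fun i k => G.solid i k ∨
    (∃ j, i ≠ j ∧ j ≠ k ∧ i ≠ k ∧ G.solid i j ∧ G.solid j k)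
  broken := fun i k => G.broken i k ∨
    (∃ j, i ≠ j ∧ j ≠ k ∧ i ≠ k ∧
      ((G.solid i j ∧ G.broken j k) ∨ (G.broken i j ∧ G.solid j k)))

/-- The l-th transitive closure `G^{(l)}`. -/
def SBGraph.closure {n : ℕ} (G : SBGraph n) (l : ℕ) : SBGraph n :=
  (fun H => SBGraph.step H)^[l] G

/-- `G` is the complete graph on the n+1 vertices: every pair of distinct vertices
is joined by a (solid or broken) edge. -/
def SBGraph.IsComplete {n : ℕ} (G : SBGraph n) : Prop :=
  ∀ p q : Fin (n + 1), p ≠ q → G.solid p q ∨ G.broken p q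

/-- The graph `G(B_Λ)` associated with a pattern: solid edges {i,j} for (i,j) ∈ Λ with
j ≤ n, broken edges {k,n+1} for (k,n+1) ∈ Λ. -/
def patternGraph {n : ℕ} (Λ : Set (Fin (n + 1) × Fin (n + 1))) : SBGraph n where
  solid := fun p q => ∃ i j : Fin n, (i.castSucc, j.castSucc) ∈ Λ ∧
    ((p = i.castSucc ∧ q = j.castSucc) ∨ (p = j.castSucc ∧ q = i.castSucc))
  broken := fun p q => ∃ k : Fin n, (k.castSucc, Fin.last n) ∈ Λ ∧
    ((p = k.castSucc ∧ q = Fin.last n) ∨ (p = Fin.last n ∧ q = k.castSucc))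

/-- One step of the derived-distribution construction:
`D ↦ D + span{[A₁,A₂] : A₁,A₂ ∈ D}`. -/
def derivedStep {n : ℕ} (D : Submodule ℝ (Mat n)) : Submodule ℝ (Mat n) :=
  D ⊔ Submodule.span ℝ {M | ∃ A B, A ∈ D ∧ B ∈ D ∧ M = A * B - B * A}

/-- The i-th derived distribution `D^{(i)}`. -/
def derivedIter {n : ℕ} (D : Submodule ℝ (Mat n)) (i : ℕ) : Submodule ℝ (Mat n) :=
  (fun S => derivedStep S)^[i] D


/-!
An entry `(A * B) p q` is nonzero only if `A p r` and `B r q` are nonzero for some `r`. Hence, for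
a solid/broken graph `H` that is stable under the one-step closure, the matrices with zero last row
supported on the edges of `H` form a Lie subalgebra. Taking for `H` the graph of solid components
of `G(B_Λ)`, with `n+1` joined to every component that meets a broken edge, the Lie algebra
generated by `B_Λ` contains `Ω̃_{ij}` and `E_{k,n+1}` only for edges of `H`; and `H ⊆ G^{(n)}`,
because a shortest solid path has fewer than `n` edges and a path with `l` edges collapses to an
edge within `l` closure steps. Conversely the brackets `[Ω̃_{ij}, Ω̃_{jk}] = Ω̃_{ik}` and
`[Ω̃_{ij}, E_{j,n+1}] = E_{i,n+1}` realize every edge of every `G^{(l)}` in the generated algebra,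
and `se(n)` is spanned by the `Ω̃_{ij}` and `E_{k,n+1}`.
-/

namespace Matrix

variable {l m o α : Type*} [Fintype m] [NonUnitalNonAssocSemiring α]

lemma exists_ne_zero_of_mul_apply_ne_zero {A : Matrix l m α} {B : Matrix m o α} {p : l} {q : o}
    (h : (A * B) p q ≠ 0) : ∃ r, A p r ≠ 0 ∧ B r q ≠ 0 := by
  obtain ⟨r, -, hr⟩ := Finset.exists_ne_zero_of_sum_ne_zero h
  exact ⟨r, left_ne_zero_of_mul hr, right_ne_zero_of_mul hr⟩

lemma mul_apply_eq_zero_of_row_eq_zero {A : Matrix l m α} {p : l} (hA : ∀ r, A p r = 0)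
    (B : Matrix m o α) (q : o) : (A * B) p q = 0 := by
  simp [Matrix.mul_apply, hA]

lemma single_mul_single [DecidableEq m] [DecidableEq l] [DecidableEq o] (i : l) (j k : m) (r : o)
    (a b : α) : single i j a * single k r b = if j = k then single i r (a * b) else 0 := by
  split_ifs with h
  · rw [h, single_mul_single_same]
  · exact single_mul_single_of_ne a i j k h b

end Matrix

@[simp]
lemma Fin.last_ne_castSucc {n : ℕ} (i : Fin n) : Fin.last n ≠ i.castSucc :=
  (Fin.castSucc_ne_last i).symm

variable {n : ℕ}

abbrev lieGen (Λ : Set (Fin (n + 1) × Fin (n + 1))) : LieSubalgebra ℝ (Mat n) :=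
  LieSubalgebra.lieSpan ℝ (Mat n) (BLam Λ : Set (Mat n))

lemma omega_apply (i j : Fin n) (p q : Fin (n + 1)) :
    Omega i j p q = (if i.castSucc = p ∧ j.castSucc = q then 1 else 0) -
      (if j.castSucc = p ∧ i.castSucc = q then 1 else 0) :=
  rfl

lemma ecol_apply (k : Fin n) (p q : Fin (n + 1)) :
    Ecol k p q = if k.castSucc = p ∧ Fin.last n = q then 1 else 0 :=
  rfl

lemma omega_self (i : Fin n) : Omega i i = 0 := sub_self _

lemma omega_swap (i j : Fin n) : Omega j i = -Omega i j := (neg_sub _ _).symm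

lemma omega_lie_omega {i j k : Fin n} (hij : i ≠ j) (hjk : j ≠ k) (hik : i ≠ k) :
    ⁅Omega i j, Omega j k⁆ = Omega i k := by
  simp only [Ring.lie_def, Omega, sub_mul, mul_sub, Matrix.single_mul_single, Fin.castSucc_inj,
    hij, hjk, hik, hij.symm, hjk.symm, hik.symm, if_true, if_false, mul_one]
  abel

lemma omega_lie_ecol {i j : Fin n} (hij : i ≠ j) : ⁅Omega i j, Ecol j⁆ = Ecol i := by
  simp only [Ring.lie_def, Omega, Ecol, sub_mul, mul_sub, Matrix.single_mul_single,
    Fin.castSucc_inj, hij, (Fin.castSucc_ne_last _).symm, if_true, if_false, mul_one]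
  abel

lemma omega_mem_seSet (i j : Fin n) : Omega i j ∈ seSet n := by
  refine ⟨fun q => by simp [omega_apply], fun a b => ?_⟩
  simp only [omega_apply, Fin.castSucc_inj]
  split_ifs <;> grind

lemma ecol_mem_seSet (k : Fin n) : Ecol k ∈ seSet n :=
  ⟨fun q => by simp [ecol_apply], fun a b => by simp [ecol_apply]⟩

def seLie (n : ℕ) : LieSubalgebra ℝ (Mat n) :=
  { seL n with
    lie_mem' := by
      rintro A B ⟨hA, hA'⟩ ⟨hB, hB'⟩
      refine ⟨fun j => ?_, fun i j => ?_⟩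
      · rw [Ring.lie_def, Matrix.sub_apply, Matrix.mul_apply_eq_zero_of_row_eq_zero hA,
          Matrix.mul_apply_eq_zero_of_row_eq_zero hB, sub_zero]
      · simp only [Ring.lie_def, Matrix.sub_apply, Matrix.mul_apply, Fin.sum_univ_castSucc, hA,
          hB, mul_zero, add_zero, ← Finset.sum_sub_distrib, ← Finset.sum_neg_distrib]
        refine Finset.sum_congr rfl fun r _ => ?_
        rw [hA' i r, hB' r j, hA' r j, hB' i r]
        ring }

lemma seSet_subset_of_forall_mem {K : Submodule ℝ (Mat n)}
    (hΩ : ∀ i j, i ≠ j → Omega i j ∈ K) (hE : ∀ k, Ecol k ∈ K) : seSet n ⊆ K := by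
  intro M hM
  have hdecomp : M = ∑ i, ∑ j, (M i.castSucc j.castSucc / 2) • Omega i j +
      ∑ k, M k.castSucc (Fin.last n) • Ecol k := by
    ext p q
    induction p using Fin.lastCases with
    | last => simp [Matrix.sum_apply, omega_apply, ecol_apply, hM.1]
    | cast a =>
      induction q using Fin.lastCases with
      | last => simp [Matrix.sum_apply, omega_apply, ecol_apply]
      | cast b =>
        simp [Matrix.sum_apply, omega_apply, ecol_apply, mul_sub, ite_and,
          Finset.sum_ite_eq', hM.2 b a]
        ring
  rw [hdecomp]
  refine add_mem (sum_mem fun i _ => sum_mem fun j _ => K.smul_mem _ ?_)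
    (sum_mem fun k _ => K.smul_mem _ (hE k))
  obtain rfl | hij := eq_or_ne i j
  · rw [omega_self]; exact zero_mem K
  · exact hΩ i j hij

namespace SBGraph

instance : Preorder (SBGraph n) where
  le G H := (∀ p q, G.solid p q → H.solid p q) ∧ ∀ p q, G.broken p q → H.broken p q
  le_refl _ := ⟨fun _ _ => id, fun _ _ => id⟩
  le_trans _ _ _ h₁ h₂ :=
    ⟨fun p q h => h₂.1 p q (h₁.1 p q h), fun p q h => h₂.2 p q (h₁.2 p q h)⟩

lemma le_step (G : SBGraph n) : G ≤ G.step := ⟨fun _ _ => Or.inl, fun _ _ => Or.inl⟩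

lemma closure_succ (G : SBGraph n) (l : ℕ) : G.closure (l + 1) = (G.closure l).step :=
  Function.iterate_succ_apply' _ _ _

lemma monotone_closure (G : SBGraph n) : Monotone G.closure :=
  monotone_nat_of_le_succ fun l => (G.closure_succ l).symm ▸ le_step _

lemma le_closure (G : SBGraph n) (l : ℕ) : G ≤ G.closure l :=
  G.monotone_closure (Nat.zero_le l)

structure Admissible (G : SBGraph n) : Prop where
  solid_symm : ∀ {p q}, G.solid p q → G.solid q p
  broken_symm : ∀ {p q}, G.broken p q → G.broken q p
  solid_ne_last : ∀ {p q}, G.solid p q → q ≠ Fin.last n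
  broken_last : ∀ {p q}, G.broken p q → p = Fin.last n ∨ q = Fin.last n

variable {G : SBGraph n}

lemma Admissible.step (hG : G.Admissible) : G.step.Admissible where
  solid_symm := by
    rintro p q (h | ⟨j, hpj, hjq, hpq, hpj', hjq'⟩)
    · exact Or.inl (hG.solid_symm h)
    · exact Or.inr ⟨j, hjq.symm, hpj.symm, hpq.symm, hG.solid_symm hjq', hG.solid_symm hpj'⟩
  broken_symm := by
    rintro p q (h | ⟨j, hpj, hjq, hpq, ⟨hs, hb⟩ | ⟨hb, hs⟩⟩)
    · exact Or.inl (hG.broken_symm h)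
    · exact Or.inr ⟨j, hjq.symm, hpj.symm, hpq.symm,
        Or.inr ⟨hG.broken_symm hb, hG.solid_symm hs⟩⟩
    · exact Or.inr ⟨j, hjq.symm, hpj.symm, hpq.symm,
        Or.inl ⟨hG.solid_symm hs, hG.broken_symm hb⟩⟩
  solid_ne_last := by
    rintro p q (h | ⟨j, -, -, -, -, h⟩) <;> exact hG.solid_ne_last h
  broken_last := by
    rintro p q (h | ⟨j, -, -, -, ⟨hs, hb⟩ | ⟨hb, hs⟩⟩)
    · exact hG.broken_last h
    · exact Or.inr ((hG.broken_last hb).resolve_left (hG.solid_ne_last hs))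
    · exact Or.inl ((hG.broken_last hb).resolve_right (hG.solid_ne_last (hG.solid_symm hs)))

lemma Admissible.closure (hG : G.Admissible) (l : ℕ) : (G.closure l).Admissible := by
  induction l with
  | zero => exact hG
  | succ l ih => rw [closure_succ]; exact ih.step

lemma Admissible.isComplete_iff (hG : G.Admissible) :
    G.IsComplete ↔ (∀ i j : Fin n, i ≠ j → G.solid i.castSucc j.castSucc) ∧
      ∀ k : Fin n, G.broken k.castSucc (Fin.last n) := by
  refine ⟨fun h => ⟨fun i j hij => ?_, fun k => ?_⟩, fun ⟨hs, hb⟩ p q hpq => ?_⟩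
  · refine (h _ _ ((Fin.castSucc_injective n).ne hij)).resolve_right fun hb => ?_
    rcases hG.broken_last hb with h | h <;> exact Fin.castSucc_ne_last _ h
  · exact (h _ _ (Fin.castSucc_ne_last k)).resolve_left fun hs => hG.solid_ne_last hs rfl
  · induction p using Fin.lastCases with
    | last =>
      obtain ⟨k, rfl⟩ := Fin.exists_castSucc_eq.mpr hpq.symm
      exact Or.inr (hG.broken_symm (hb k))
    | cast i =>
      induction q using Fin.lastCases with
      | last => exact Or.inr (hb i)
      | cast j => exact Or.inl (hs i j (ne_of_apply_ne _ hpq))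

def RealizedIn (G : SBGraph n) (K : Set (Mat n)) : Prop :=
  (∀ i j : Fin n, G.solid i.castSucc j.castSucc → Omega i j ∈ K) ∧
    ∀ k : Fin n, G.broken k.castSucc (Fin.last n) → Ecol k ∈ K

lemma RealizedIn.step (hG : G.Admissible) {K : LieSubalgebra ℝ (Mat n)}
    (h : G.RealizedIn K) : G.step.RealizedIn K := by
  obtain ⟨hΩ, hE⟩ := h
  refine ⟨?_, ?_⟩
  · rintro i j (hs | ⟨m, him, hmj, hij, him', hmj'⟩)
    · exact hΩ i j hs
    · obtain ⟨a, rfl⟩ := Fin.exists_castSucc_eq.mpr (hG.solid_ne_last him')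
      rw [← omega_lie_omega (ne_of_apply_ne _ him) (ne_of_apply_ne _ hmj) (ne_of_apply_ne _ hij)]
      exact K.lie_mem (hΩ i a him') (hΩ a j hmj')
  · rintro k (hb | ⟨m, hkm, -, -, ⟨hs, hb⟩ | ⟨-, hs⟩⟩)
    · exact hE k hb
    · obtain ⟨a, rfl⟩ := Fin.exists_castSucc_eq.mpr (hG.solid_ne_last hs)
      rw [← omega_lie_ecol (ne_of_apply_ne _ hkm)]
      exact K.lie_mem (hΩ k a hs) (hE a hb)
    · exact absurd rfl (hG.solid_ne_last hs)

lemma RealizedIn.closure (hG : G.Admissible) {K : LieSubalgebra ℝ (Mat n)}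
    (h : G.RealizedIn K) (l : ℕ) : (G.closure l).RealizedIn K := by
  induction l with
  | zero => exact h
  | succ l ih => rw [closure_succ]; exact ih.step (hG.closure l)

def Edge (H : SBGraph n) (p q : Fin (n + 1)) : Prop :=
  (q = Fin.last n ∧ H.broken p q) ∨ (q ≠ Fin.last n ∧ H.solid p q)

def supported (H : SBGraph n) : Submodule ℝ (Mat n) where
  carrier := {M | (∀ j, M (Fin.last n) j = 0) ∧ ∀ p q, p ≠ q → M p q ≠ 0 → H.Edge p q}
  add_mem' := by
    rintro A B ⟨hA, hA'⟩ ⟨hB, hB'⟩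
    refine ⟨fun j => by simp [hA j, hB j], fun p q hpq h => ?_⟩
    by_cases hAq : A p q = 0
    · exact hB' p q hpq (by simpa [hAq] using h)
    · exact hA' p q hpq hAq
  zero_mem' := ⟨fun _ => rfl, fun _ _ _ h => absurd rfl h⟩
  smul_mem' := by
    rintro c A ⟨hA, hA'⟩
    exact ⟨fun j => by simp [hA j], fun p q hpq h => hA' p q hpq (right_ne_zero_of_mul h)⟩

variable {H : SBGraph n}

lemma edge_of_mul_apply_ne_zero (hH : H.step ≤ H) {A B : Mat n} (hA : A ∈ H.supported)
    (hB : B ∈ H.supported) {p q : Fin (n + 1)} (hpq : p ≠ q) (h : (A * B) p q ≠ 0) :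
    H.Edge p q := by
  obtain ⟨r, hpr, hrq⟩ := Matrix.exists_ne_zero_of_mul_apply_ne_zero h
  obtain rfl | hrp := eq_or_ne r p
  · exact hB.2 _ _ hpq hrq
  obtain rfl | hrq' := eq_or_ne r q
  · exact hA.2 _ _ hpq hpr
  obtain ⟨rfl, -⟩ | ⟨-, hs⟩ := hA.2 p r hrp.symm hpr
  · exact absurd (hB.1 q) hrq
  obtain ⟨hq, hb⟩ | ⟨hq, hs'⟩ := hB.2 r q hrq' hrq
  · exact Or.inl ⟨hq, hH.2 p q (Or.inr ⟨r, hrp.symm, hrq', hpq, Or.inl ⟨hs, hb⟩⟩)⟩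
  · exact Or.inr ⟨hq, hH.1 p q (Or.inr ⟨r, hrp.symm, hrq', hpq, hs, hs'⟩)⟩

def supportedLie (H : SBGraph n) (hH : H.step ≤ H) : LieSubalgebra ℝ (Mat n) :=
  { H.supported with
    lie_mem' := by
      intro A B hA hB
      refine ⟨fun j => ?_, fun p q hpq h => ?_⟩
      · rw [Ring.lie_def, Matrix.sub_apply, Matrix.mul_apply_eq_zero_of_row_eq_zero hA.1,
          Matrix.mul_apply_eq_zero_of_row_eq_zero hB.1, sub_zero]
      · rw [Ring.lie_def, Matrix.sub_apply] at h
        by_cases hAB : (A * B) p q = 0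
        · exact edge_of_mul_apply_ne_zero hH hB hA hpq (by simpa [hAB] using h)
        · exact edge_of_mul_apply_ne_zero hH hA hB hpq hAB }

lemma omega_mem_supported_iff {i j : Fin n} (hij : i ≠ j) :
    Omega i j ∈ H.supported ↔
      H.solid i.castSucc j.castSucc ∧ H.solid j.castSucc i.castSucc := by
  have hsolid : ∀ {p q : Fin n}, H.Edge p.castSucc q.castSucc →
      H.solid p.castSucc q.castSucc := by
    rintro p q (⟨h, -⟩ | ⟨-, h⟩)
    exacts [absurd h (Fin.castSucc_ne_last _), h]
  refine ⟨fun h => ⟨hsolid (h.2 _ _ ?_ ?_), hsolid (h.2 _ _ ?_ ?_)⟩, ?_⟩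
  · exact (Fin.castSucc_injective n).ne hij
  · simp [omega_apply, hij]
  · exact (Fin.castSucc_injective n).ne hij.symm
  · simp [omega_apply, hij]
  · rintro ⟨hs, hs'⟩
    refine ⟨fun q => by simp [omega_apply], fun p q _ h => ?_⟩
    rw [omega_apply] at h
    split_ifs at h with h₁ h₂ h₃
    · simp at h
    · exact Or.inr ⟨h₁.2 ▸ Fin.castSucc_ne_last j, h₁.1 ▸ h₁.2 ▸ hs⟩
    · exact Or.inr ⟨h₃.2 ▸ Fin.castSucc_ne_last i, h₃.1 ▸ h₃.2 ▸ hs'⟩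
    · simp at h

lemma ecol_mem_supported_iff {k : Fin n} :
    Ecol k ∈ H.supported ↔ H.broken k.castSucc (Fin.last n) := by
  refine ⟨fun h => ?_, fun h => ⟨fun q => by simp [ecol_apply], fun p q _ hpq => ?_⟩⟩
  · obtain ⟨-, hb⟩ | ⟨hne, -⟩ := h.2 _ _ (Fin.castSucc_ne_last k) (by simp [ecol_apply])
    exacts [hb, absurd rfl hne]
  · rw [ecol_apply] at hpq
    split_ifs at hpq with hkq
    · exact Or.inl ⟨hkq.2.symm, hkq.1 ▸ hkq.2 ▸ h⟩
    · simp at hpq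

variable {G : SBGraph n}

def solidGraph (G : SBGraph n) : SimpleGraph (Fin n) :=
  SimpleGraph.fromRel fun i j => G.solid i.castSucc j.castSucc

/-- Broken edges are recorded only in the orientation `(i, n+1)`, the one `Edge` reads. -/
def reachGraph (G : SBGraph n) : SBGraph n where
  solid p q := ∃ i j : Fin n, i ≠ j ∧ p = i.castSucc ∧ q = j.castSucc ∧
    G.solidGraph.Reachable i j
  broken p q := ∃ i k : Fin n, p = i.castSucc ∧ q = Fin.last n ∧
    G.broken k.castSucc (Fin.last n) ∧ G.solidGraph.Reachable i k

lemma reachGraph_step_le (G : SBGraph n) : G.reachGraph.step ≤ G.reachGraph := by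
  refine ⟨?_, ?_⟩
  · rintro p q (h | ⟨m, -, -, hpq, ⟨i, a, -, rfl, rfl, hia⟩, ⟨a', j, -, ha, rfl, haj⟩⟩)
    · exact h
    · obtain rfl := Fin.castSucc_injective n ha
      exact ⟨i, j, ne_of_apply_ne _ hpq, rfl, rfl, hia.trans haj⟩
  · rintro p q (h | ⟨m, -, -, -,
      ⟨⟨i, a, -, rfl, rfl, hia⟩, ⟨a', k, ha, rfl, hk, hak⟩⟩ |
      ⟨⟨-, -, -, rfl, -⟩, ⟨a, -, -, ha, -, -⟩⟩⟩)
    · exact h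
    · obtain rfl := Fin.castSucc_injective n ha
      exact ⟨i, k, rfl, rfl, hk, hia.trans hak⟩
    · exact absurd ha.symm (Fin.castSucc_ne_last a)

lemma closure_solid_of_walk (hsymm : ∀ {p q}, G.solid p q → G.solid q p) {i j : Fin n}
    (w : G.solidGraph.Walk i j) (hij : i ≠ j) :
    (G.closure w.length).solid i.castSucc j.castSucc := by
  induction w with
  | nil => exact absurd rfl hij
  | @cons i v j hadj w ih =>
    have hiv : G.solid i.castSucc v.castSucc := by
      obtain ⟨-, h | h⟩ := (SimpleGraph.fromRel_adj _ _ _).mp hadj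
      exacts [h, hsymm h]
    obtain rfl | hvj := eq_or_ne v j
    · exact (G.le_closure _).1 _ _ hiv
    rw [SimpleGraph.Walk.length_cons, closure_succ]
    exact Or.inr ⟨v.castSucc, (Fin.castSucc_injective n).ne hadj.ne,
      (Fin.castSucc_injective n).ne hvj, (Fin.castSucc_injective n).ne hij,
      (G.le_closure _).1 _ _ hiv, ih hvj⟩

lemma closure_solid_of_reachable (hsymm : ∀ {p q}, G.solid p q → G.solid q p) {i j : Fin n}
    (hij : i ≠ j) (h : G.solidGraph.Reachable i j) :
    ∃ l < n, (G.closure l).solid i.castSucc j.castSucc := by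
  obtain ⟨w, hw⟩ := h.exists_isPath
  exact ⟨w.length, by simpa using hw.length_lt, closure_solid_of_walk hsymm w hij⟩

lemma reachGraph_le_closure (hsymm : ∀ {p q}, G.solid p q → G.solid q p) :
    G.reachGraph ≤ G.closure n := by
  refine ⟨?_, ?_⟩
  · rintro p q ⟨i, j, hij, rfl, rfl, h⟩
    obtain ⟨l, hl, hs⟩ := closure_solid_of_reachable hsymm hij h
    exact (G.monotone_closure hl.le).1 _ _ hs
  · rintro p q ⟨i, k, rfl, rfl, hk, h⟩
    obtain rfl | hik := eq_or_ne i k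
    · exact (G.le_closure n).2 _ _ hk
    obtain ⟨l, hl, hs⟩ := closure_solid_of_reachable hsymm hik h
    have hb : (G.closure (l + 1)).broken i.castSucc (Fin.last n) := by
      rw [closure_succ]
      exact Or.inr ⟨k.castSucc, (Fin.castSucc_injective n).ne hik, Fin.castSucc_ne_last k,
        Fin.castSucc_ne_last i, Or.inl ⟨hs, (G.le_closure l).2 _ _ hk⟩⟩
    exact (G.monotone_closure hl).2 _ _ hb

end SBGraph

section Pattern

variable (Λ : Set (Fin (n + 1) × Fin (n + 1)))

lemma patternGraph_admissible : (patternGraph Λ).Admissible where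
  solid_symm := fun ⟨i, j, h, hpq⟩ => ⟨i, j, h, hpq.symm.imp And.symm And.symm⟩
  broken_symm := fun ⟨k, h, hpq⟩ => ⟨k, h, hpq.symm.imp And.symm And.symm⟩
  solid_ne_last := by
    rintro p q ⟨i, j, -, ⟨-, rfl⟩ | ⟨-, rfl⟩⟩ <;> exact Fin.castSucc_ne_last _
  broken_last := by
    rintro p q ⟨k, -, ⟨-, rfl⟩ | ⟨rfl, -⟩⟩
    exacts [Or.inr rfl, Or.inl rfl]

lemma patternGraph_realizedIn : (patternGraph Λ).RealizedIn (lieGen Λ) := by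
  have hgen : ∀ M ∈ genSet Λ, M ∈ lieGen Λ :=
    fun M hM => LieSubalgebra.subset_lieSpan (Submodule.subset_span hM)
  refine ⟨?_, ?_⟩
  · rintro i j ⟨a, b, h, ⟨ha, hb⟩ | ⟨ha, hb⟩⟩
    · rw [Fin.castSucc_inj] at ha hb
      subst ha hb
      exact hgen _ (Or.inl ⟨i, j, h, rfl⟩)
    · rw [Fin.castSucc_inj] at ha hb
      subst ha hb
      rw [omega_swap]
      exact neg_mem (hgen _ (Or.inl ⟨j, i, h, rfl⟩))
  · rintro k ⟨a, h, ⟨ha, -⟩ | ⟨ha, -⟩⟩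
    · rw [Fin.castSucc_inj] at ha
      exact ha ▸ hgen _ (Or.inr ⟨a, h, rfl⟩)
    · exact absurd ha (Fin.castSucc_ne_last k)

lemma genSet_subset_supported : genSet Λ ⊆ (patternGraph Λ).reachGraph.supported := by
  rintro M (⟨i, j, hij, rfl⟩ | ⟨k, hk, rfl⟩)
  · obtain rfl | hne := eq_or_ne i j
    · rw [omega_self]; exact zero_mem _
    have hadj : (patternGraph Λ).solidGraph.Adj i j :=
      (SimpleGraph.fromRel_adj _ _ _).mpr ⟨hne, Or.inl ⟨i, j, hij, Or.inl ⟨rfl, rfl⟩⟩⟩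
    exact (SBGraph.omega_mem_supported_iff hne).mpr
      ⟨⟨i, j, hne, rfl, rfl, hadj.reachable⟩,
        ⟨j, i, hne.symm, rfl, rfl, hadj.symm.reachable⟩⟩
  · exact SBGraph.ecol_mem_supported_iff.mpr
      ⟨k, k, rfl, rfl, ⟨k, hk, Or.inl ⟨rfl, rfl⟩⟩, SimpleGraph.Reachable.refl _⟩

lemma lieGen_le_supportedLie :
    lieGen Λ ≤ (patternGraph Λ).reachGraph.supportedLie (SBGraph.reachGraph_step_le _) :=
  LieSubalgebra.lieSpan_le.mpr (Submodule.span_le.mpr (genSet_subset_supported Λ))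

end Pattern

section Generation

variable {Λ : Set (Fin (n + 1) × Fin (n + 1))}

lemma generatesSE_iff :
    GeneratesSE n Λ ↔
      (∀ i j : Fin n, i ≠ j → Omega i j ∈ lieGen Λ) ∧ ∀ k, Ecol k ∈ lieGen Λ := by
  refine ⟨fun h => ⟨fun i j _ => ?_, fun k => ?_⟩, fun ⟨hΩ, hE⟩ => ?_⟩
  · rw [← SetLike.mem_coe, h]; exact omega_mem_seSet i j
  · rw [← SetLike.mem_coe, h]; exact ecol_mem_seSet k
  refine subset_antisymm ?_ (seSet_subset_of_forall_mem (K := (lieGen Λ).toSubmodule) hΩ hE)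
  have hgen : genSet Λ ⊆ seSet n := by
    rintro M (⟨i, j, -, rfl⟩ | ⟨k, -, rfl⟩)
    exacts [omega_mem_seSet i j, ecol_mem_seSet k]
  exact LieSubalgebra.lieSpan_le (K := seLie n) |>.mpr (Submodule.span_le.mpr hgen)

lemma closure_realizedIn (l : ℕ) : ((patternGraph Λ).closure l).RealizedIn (lieGen Λ) :=
  (patternGraph_realizedIn Λ).closure (patternGraph_admissible Λ) l

lemma omega_mem_lieGen_iff {i j : Fin n} (hij : i ≠ j) :
    Omega i j ∈ lieGen Λ ↔ ((patternGraph Λ).closure n).solid i.castSucc j.castSucc := by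
  refine ⟨fun h => ?_, (closure_realizedIn n).1 i j⟩
  have hs := ((SBGraph.omega_mem_supported_iff hij).mp (lieGen_le_supportedLie Λ h)).1
  exact (SBGraph.reachGraph_le_closure (patternGraph_admissible Λ).solid_symm).1 _ _ hs

lemma ecol_mem_lieGen_iff {k : Fin n} :
    Ecol k ∈ lieGen Λ ↔ ((patternGraph Λ).closure n).broken k.castSucc (Fin.last n) := by
  refine ⟨fun h => ?_, (closure_realizedIn n).2 k⟩
  have hb := SBGraph.ecol_mem_supported_iff.mp (lieGen_le_supportedLie Λ h)
  exact (SBGraph.reachGraph_le_closure (patternGraph_admissible Λ).solid_symm).2 _ _ hb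

end Generation

theorem stmt7_general (n : ℕ) (Λ : Set (Fin (n + 1) × Fin (n + 1))) :
    GeneratesSE n Λ ↔ ((patternGraph Λ).closure n).IsComplete := by
  rw [generatesSE_iff, ((patternGraph_admissible Λ).closure n).isComplete_iff]
  exact and_congr (forall₂_congr fun _ _ => imp_congr_right omega_mem_lieGen_iff)
    (forall_congr' fun _ => ecol_mem_lieGen_iff)

/-- The Lie subalgebra generated by B_Λ equals se(n) if and only if
the n-th transitive closure of G(B_Λ) is the complete graph on the n+1 vertices. -/
theorem stmt7 (n : ℕ) (hn : 1 ≤ n) (Λ : Set (Fin (n + 1) × Fin (n + 1)))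
    (hΛ : IndexSet Λ) :
    GeneratesSE n Λ ↔ ((patternGraph Λ).closure n).IsComplete :=
  stmt7_general n Λ
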